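/- arXiv:2307.05692 — 3 statements merged into one kernel-verified Lean document; each statement's English description precedes it below -/
import Mathlib

section
/- Let (d_n)_{n=1}^N be a martingale difference sequence in L^3 with respect to a filtration (F_n), and let (X_n)_{n=1}^N be i.i.d. Bernoulli(p) random variables independent of the filtration F_N. Set φ = Σ_n X_n d_n. Then E[φ^3] = M_1 p + M_2 p^2, where M_1 = Σ_n E[d_n^3] and M_2 = 3 Σ_{m<n} E[d_m d_n^2]. -/
open MeasureTheory ProbabilityTheory Finset
open scoped ENNReal

private lemma tm_e1 : (1:ℝ≥0∞)/(3/2) = 1/3 + 1/3 := by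
  rw [ENNReal.div_add_div_same, one_div, ENNReal.inv_div (by norm_num) (by norm_num)]
  norm_num

private lemma tm_e2 : (1:ℝ≥0∞)/1 = 1/3 + 1/(3/2) := by
  rw [tm_e1, ENNReal.div_add_div_same, ENNReal.div_add_div_same,
    show (1:ℝ≥0∞)+(1+1) = 3 by norm_num, ENNReal.div_self (by norm_num) (by norm_num)]
  exact (ENNReal.div_self (by norm_num) (by norm_num)).symm

private lemma tm_e2' : (1:ℝ≥0∞)/1 = 1/(3/2) + 1/3 := by
  rw [tm_e2]; exact add_comm _ _

private lemma tm_mul {Ω : Type*} {m0 : MeasurableSpace Ω} {μ : Measure Ω}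
    {f g : Ω → ℝ} {q r s : ℝ≥0∞} (hf : MemLp f q μ) (hg : MemLp g r μ)
    (h : 1/s = 1/q + 1/r) : MemLp (fun ω => f ω * g ω) s μ :=
  by haveI : ENNReal.HolderTriple q r s := ⟨by simpa only [one_div] using h.symm⟩; exact hg.smul hf

private lemma tm_int3 {Ω : Type*} {m0 : MeasurableSpace Ω} {μ : Measure Ω} [IsFiniteMeasure μ]
    {f g h : Ω → ℝ} (hf : MemLp f 3 μ) (hg : MemLp g 3 μ) (hh : MemLp h 3 μ) :
    Integrable (fun ω => f ω * g ω * h ω) μ :=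
  (tm_mul (tm_mul hf hg tm_e1) hh tm_e2').integrable le_rfl

/-- The third moment of a random Bernoulli selection of a martingale difference
sequence is a quadratic polynomial in the Bernoulli parameter `p`. -/
theorem third_moment_random_martingale_selection
    {Ω : Type*} {m0 : MeasurableSpace Ω} (μ : Measure Ω) [IsProbabilityMeasure μ]
    (N : ℕ) (ℱ : ℕ → MeasurableSpace Ω) (hℱ_mono : Monotone ℱ) (hℱ_le : ∀ n, ℱ n ≤ m0)
    (d : ℕ → Ω → ℝ)
    (hd_meas : ∀ n, Measurable[ℱ n] (d n))
    (hd_L3 : ∀ n, MemLp (d n) 3 μ)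
    (hd_mart : ∀ n, 1 ≤ n → μ[d n | ℱ (n - 1)] =ᵐ[μ] 0)
    (p : ℝ) (hp0 : 0 ≤ p) (hp1 : p ≤ 1)
    (X : ℕ → Ω → ℝ) (hX_meas : ∀ n, Measurable (X n))
    (hX_val : ∀ n ω, X n ω = 0 ∨ X n ω = 1)
    (hX_prob : ∀ n, μ {ω | X n ω = 1} = ENNReal.ofReal p)
    -- the Bernoulli variables and the σ-algebra ℱ N are jointly independent
    (h_indep : iIndep
      (fun i : ℕ ⊕ Unit =>
        Sum.elim (fun n : ℕ => MeasurableSpace.comap (X n) inferInstance)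
          (fun _ : Unit => ℱ N) i) μ) :
    ∫ ω, (∑ n ∈ Icc 1 N, X n ω * d n ω) ^ 3 ∂μ =
      (∑ n ∈ Icc 1 N, ∫ ω, (d n ω) ^ 3 ∂μ) * p +
      (3 * ∑ n ∈ Icc 1 N, ∑ m ∈ Icc 1 N with m < n, ∫ ω, d m ω * (d n ω) ^ 2 ∂μ) * p ^ 2 := by
  classical
  have hMX_le : (⨆ n, MeasurableSpace.comap (X n) inferInstance) ≤ m0 :=
    iSup_le fun n => (hX_meas n).comap_le
  have hXMX : ∀ n, Measurable[⨆ n, MeasurableSpace.comap (X n) inferInstance] (X n) := fun n =>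
    Measurable.of_comap_le (le_iSup (fun n => MeasurableSpace.comap (X n) inferInstance) n)
  -- independence of the σ-algebra generated by all the `X n` from `ℱ N`
  have hIndepMF : Indep (⨆ n, MeasurableSpace.comap (X n) inferInstance) (ℱ N) μ := by
    have h1 := indep_iSup_of_disjoint (μ := μ)
      (m := fun i : ℕ ⊕ Unit =>
        Sum.elim (fun n : ℕ => MeasurableSpace.comap (X n) inferInstance)
          (fun _ : Unit => ℱ N) i)
      (fun i => by
        cases i with
        | inl n => exact (hX_meas n).comap_le
        | inr u => exact hℱ_le N)
      h_indep
      (S := Set.range (Sum.inl : ℕ → ℕ ⊕ Unit)) (T := {Sum.inr ()})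
      (by simp [Set.disjoint_left])
    rw [iSup_range, _root_.iSup_singleton] at h1
    simpa using h1
  -- factorization of expectations
  have hfactF : ∀ f g : Ω → ℝ,
      Measurable[⨆ n, MeasurableSpace.comap (X n) inferInstance] f → Measurable[ℱ N] g →
      ∫ ω, f ω * g ω ∂μ = (∫ ω, f ω ∂μ) * ∫ ω, g ω ∂μ := by
    intro f g hf hg
    have hIF : IndepFun f g μ :=
      indep_of_indep_of_le_right (indep_of_indep_of_le_left hIndepMF hf.comap_le) hg.comap_le
    exact hIF.integral_mul_eq_mul_integral ((hf.mono hMX_le le_rfl).aestronglyMeasurable)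
      ((hg.mono (hℱ_le N) le_rfl).aestronglyMeasurable)
  -- expectation of each X n
  have hX_int : ∀ n, ∫ ω, X n ω ∂μ = p := by
    intro n
    have hms : MeasurableSet[m0] {ω | X n ω = 1} := hX_meas n (measurableSet_singleton 1)
    have heq : (fun ω => X n ω) = Set.indicator {ω | X n ω = 1} (fun _ => (1:ℝ)) := by
      funext ω
      rcases hX_val n ω with h | h
      · rw [h, Set.indicator_of_notMem]
        simp [Set.mem_setOf_eq, h]
      · rw [h, Set.indicator_of_mem]
        exact h
    have h2 : integral μ ({ω | X n ω = 1}.indicator fun _ => (1:ℝ))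
        = (μ {ω | X n ω = 1}).toReal • (1:ℝ) := integral_indicator_const (1:ℝ) hms
    rw [heq]
    rw [show (∫ ω, ({ω | X n ω = 1}.indicator fun _ => (1:ℝ)) ω ∂μ)
        = (μ {ω | X n ω = 1}).toReal • (1:ℝ) from h2, hX_prob n, smul_eq_mul, mul_one,
      ENNReal.toReal_ofReal hp0]
  -- expectation of a product of two distinct X's
  have hXpair : ∀ a b : ℕ, a ≠ b → ∫ ω, X a ω * X b ω ∂μ = p * p := by
    intro a b hab
    have hIF : IndepFun (X a) (X b) μ :=
      h_indep.indep (show (Sum.inl a : ℕ ⊕ Unit) ≠ Sum.inl b by simpa using hab)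
    rw [show ∫ ω, X a ω * X b ω ∂μ = (∫ ω, X a ω ∂μ) * ∫ ω, X b ω ∂μ from
        hIF.integral_mul_eq_mul_integral (hX_meas a).aestronglyMeasurable (hX_meas b).aestronglyMeasurable,
      hX_int, hX_int]
  -- measurability of the d's with respect to ℱ N
  have hdN : ∀ n, n ≤ N → Measurable[ℱ N] (d n) := fun n hn =>
    (hd_meas n).mono (hℱ_mono hn) le_rfl
  -- martingale property kills products with a unique maximal index
  have hmart0 : ∀ a b c : ℕ, a < c → b < c → ∫ ω, d a ω * d b ω * d c ω ∂μ = 0 := by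
    intro a b c ha hb
    have hintabc : Integrable (fun ω => d a ω * d b ω * d c ω) μ :=
      tm_int3 (hd_L3 a) (hd_L3 b) (hd_L3 c)
    have hintc : Integrable (d c) μ := (hd_L3 c).integrable (by norm_num)
    have hm : ℱ (c-1) ≤ m0 := hℱ_le _
    have hsm : StronglyMeasurable[ℱ (c-1)] (fun ω => d a ω * d b ω) :=
      (((hd_meas a).mono (hℱ_mono (by omega)) le_rfl).stronglyMeasurable).mul
        (((hd_meas b).mono (hℱ_mono (by omega)) le_rfl).stronglyMeasurable)
    have hpull := condExp_mul_of_stronglyMeasurable_left hsm (by exact hintabc) hintc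
    have h0 : μ[(fun ω => d a ω * d b ω) * d c|ℱ (c-1)] =ᵐ[μ] (0 : Ω → ℝ) := by
      refine hpull.trans ?_
      filter_upwards [hd_mart c (by omega)] with ω hω
      simp only [Pi.mul_apply, Pi.zero_apply] at hω ⊢
      rw [hω, mul_zero]
    calc ∫ ω, d a ω * d b ω * d c ω ∂μ
        = ∫ ω, (μ[(fun ω => d a ω * d b ω) * d c|ℱ (c-1)]) ω ∂μ :=
          (integral_condExp hm).symm
      _ = ∫ ω, (0 : Ω → ℝ) ω ∂μ := integral_congr_ae h0
      _ = 0 := by simp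
  -- each X n * d n is in L³
  have hXd3 : ∀ n, MemLp (fun ω => X n ω * d n ω) 3 μ := by
    intro n
    refine tm_mul (memLp_top_of_bound (hX_meas n).aestronglyMeasurable 1
      (Filter.Eventually.of_forall fun ω => ?_)) (hd_L3 n) (by simp)
    rcases hX_val n ω with h | h <;> rw [h] <;> norm_num
  -- the key induction
  have key : ∀ K, K ≤ N →
      ∫ ω, (∑ n ∈ Icc 1 K, X n ω * d n ω) ^ 3 ∂μ =
      (∑ n ∈ Icc 1 K, ∫ ω, (d n ω) ^ 3 ∂μ) * p +
      (3 * ∑ n ∈ Icc 1 K, ∑ m ∈ Icc 1 K with m < n, ∫ ω, d m ω * (d n ω) ^ 2 ∂μ) * p ^ 2 := by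
    intro K
    induction K with
    | zero => intro _; simp
    | succ K ih =>
      intro hK1
      have hKN : K ≤ N := by omega
      have hsucc : K + 1 ≤ N := hK1
      set A : Ω → ℝ := fun ω => ∑ n ∈ Icc 1 K, X n ω * d n ω with hA
      set B : Ω → ℝ := fun ω => X (K+1) ω * d (K+1) ω with hB
      have hA3 : MemLp A 3 μ := by
        rw [hA]; exact memLp_finsetSum (Icc 1 K) (fun i _ => hXd3 i)
      have hB3 : MemLp B 3 μ := by rw [hB]; exact hXd3 (K+1)
      have hIcc : Icc 1 (K+1) = insert (K+1) (Icc 1 K) :=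
        (Finset.insert_Icc_right_eq_Icc_add_one (by omega)).symm
      have hnotmem : (K+1) ∉ Icc 1 K := by simp
      have hexp : ∀ ω, (∑ n ∈ Icc 1 (K+1), X n ω * d n ω) ^ 3
          = A ω*A ω*A ω + 3*(A ω*A ω*B ω) + 3*(A ω*B ω*B ω) + B ω*(B ω*B ω) := by
        intro ω
        simp only [hA, hB]
        rw [hIcc, Finset.sum_insert hnotmem]
        ring
      have hintAAA : Integrable (fun ω => A ω*A ω*A ω) μ := tm_int3 hA3 hA3 hA3
      have hintAAB : Integrable (fun ω => A ω*A ω*B ω) μ := tm_int3 hA3 hA3 hB3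
      have hintABB : Integrable (fun ω => A ω*B ω*B ω) μ := tm_int3 hA3 hB3 hB3
      have hintBBB : Integrable (fun ω => B ω*(B ω*B ω)) μ := by
        have := tm_int3 hB3 hB3 hB3
        refine this.congr (Filter.Eventually.of_forall fun ω => by ring)
      have i12 : Integrable (fun ω => A ω*A ω*A ω + 3*(A ω*A ω*B ω)) μ :=
        hintAAA.add (hintAAB.const_mul 3)
      have i123 : Integrable (fun ω => A ω*A ω*A ω + 3*(A ω*A ω*B ω) + 3*(A ω*B ω*B ω)) μ :=
        i12.add (hintABB.const_mul 3)
      have hsplit : ∫ ω, (A ω*A ω*A ω + 3*(A ω*A ω*B ω) + 3*(A ω*B ω*B ω) + B ω*(B ω*B ω)) ∂μ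
          = ∫ ω, A ω*A ω*A ω ∂μ + 3*∫ ω, A ω*A ω*B ω ∂μ + 3*∫ ω, A ω*B ω*B ω ∂μ
            + ∫ ω, B ω*(B ω*B ω) ∂μ := by
        rw [integral_add i123 hintBBB, integral_add i12 (hintABB.const_mul 3),
          integral_add hintAAA (hintAAB.const_mul 3), integral_const_mul, integral_const_mul]
      -- the pure cube term
      have hT4 : ∫ ω, B ω*(B ω*B ω) ∂μ = p * ∫ ω, (d (K+1) ω)^3 ∂μ := by
        have h1 : ∀ ω, B ω*(B ω*B ω) = X (K+1) ω * (d (K+1) ω)^3 := by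
          intro ω
          simp only [hB]
          rcases hX_val (K+1) ω with h | h <;> rw [h] <;> ring
        rw [integral_congr_ae (Filter.Eventually.of_forall h1),
          hfactF (X (K+1)) (fun ω => (d (K+1) ω)^3) (hXMX (K+1))
            ((hdN (K+1) hsucc).pow_const 3), hX_int (K+1)]
      -- the A * B² term
      have hT3 : ∫ ω, A ω*B ω*B ω ∂μ
          = p*p * ∑ m ∈ Icc 1 K, ∫ ω, d m ω * (d (K+1) ω)^2 ∂μ := by
        have h1 : ∀ ω, A ω*B ω*B ω = ∑ m ∈ Icc 1 K, (X m ω * d m ω)*B ω*B ω := by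
          intro ω
          simp only [hA]
          rw [Finset.sum_mul, Finset.sum_mul]
        rw [integral_congr_ae (Filter.Eventually.of_forall h1),
          integral_finset_sum _ (fun m _ => tm_int3 (hXd3 m) hB3 hB3), Finset.mul_sum]
        refine Finset.sum_congr rfl fun m hm => ?_
        have hmK : m ≤ K := (Finset.mem_Icc.mp hm).2
        have h2 : ∀ ω, (X m ω * d m ω)*B ω*B ω
            = (X m ω * X (K+1) ω) * (d m ω * (d (K+1) ω)^2) := by
          intro ω
          simp only [hB]
          rcases hX_val (K+1) ω with h | h <;> rw [h] <;> ring
        rw [integral_congr_ae (Filter.Eventually.of_forall h2),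
          hfactF (fun ω => X m ω * X (K+1) ω) (fun ω => d m ω * (d (K+1) ω)^2)
            ((hXMX m).mul (hXMX (K+1)))
            ((hdN m (by omega)).mul ((hdN (K+1) hsucc).pow_const 2)),
          hXpair m (K+1) (by omega)]
      -- the A² * B term vanishes
      have hT2 : ∫ ω, A ω*A ω*B ω ∂μ = 0 := by
        have h1 : ∀ ω, A ω*A ω*B ω
            = ∑ a ∈ Icc 1 K, ∑ b ∈ Icc 1 K, (X a ω * d a ω)*(X b ω * d b ω)*B ω := by
          intro ω
          simp only [hA]
          rw [Finset.sum_mul_sum, Finset.sum_mul]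
          exact Finset.sum_congr rfl fun a _ => by rw [Finset.sum_mul]
        rw [integral_congr_ae (Filter.Eventually.of_forall h1),
          integral_finset_sum _ (fun a _ =>
            integrable_finset_sum _ (fun b _ => tm_int3 (hXd3 a) (hXd3 b) hB3))]
        refine Finset.sum_eq_zero fun a ha => ?_
        rw [integral_finset_sum _ (fun b _ => tm_int3 (hXd3 a) (hXd3 b) hB3)]
        refine Finset.sum_eq_zero fun b hb => ?_
        have haK : a ≤ K := (Finset.mem_Icc.mp ha).2
        have hbK : b ≤ K := (Finset.mem_Icc.mp hb).2
        have h2 : ∀ ω, (X a ω * d a ω)*(X b ω * d b ω)*B ω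
            = (X a ω * X b ω * X (K+1) ω) * (d a ω * d b ω * d (K+1) ω) := by
          intro ω
          simp only [hB]
          ring
        rw [integral_congr_ae (Filter.Eventually.of_forall h2),
          hfactF (fun ω => X a ω * X b ω * X (K+1) ω)
            (fun ω => d a ω * d b ω * d (K+1) ω)
            (((hXMX a).mul (hXMX b)).mul (hXMX (K+1)))
            (((hdN a (by omega)).mul (hdN b (by omega))).mul (hdN (K+1) hsucc)),
          hmart0 a b (K+1) (by omega) (by omega), mul_zero]
      -- put everything together
      have hT1 : ∫ ω, A ω*A ω*A ω ∂μ = ∫ ω, (∑ n ∈ Icc 1 K, X n ω * d n ω) ^ 3 ∂μ :=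
        integral_congr_ae (Filter.Eventually.of_forall fun ω => by simp only [hA]; ring)
      rw [integral_congr_ae (Filter.Eventually.of_forall hexp), hsplit, hT1, ih hKN, hT2, hT3, hT4]
      have hfilt1 : filter (fun m => m < K+1) (insert (K+1) (Icc 1 K)) = Icc 1 K := by
        ext x; simp only [Finset.mem_filter, Finset.mem_insert, Finset.mem_Icc]; omega
      have hfilt2 : ∀ n ∈ Icc 1 K, filter (fun m => m < n) (insert (K+1) (Icc 1 K))
          = filter (fun m => m < n) (Icc 1 K) := by
        intro n hn
        have hnK : n ≤ K := (Finset.mem_Icc.mp hn).2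
        ext x; simp only [Finset.mem_filter, Finset.mem_insert, Finset.mem_Icc]; omega
      rw [hIcc, Finset.sum_insert hnotmem, Finset.sum_insert hnotmem, hfilt1]
      have hsum2 : (∑ n ∈ Icc 1 K, ∑ m ∈ filter (fun m => m < n) (insert (K+1) (Icc 1 K)),
            ∫ ω, d m ω * (d n ω)^2 ∂μ)
          = ∑ n ∈ Icc 1 K, ∑ m ∈ filter (fun m => m < n) (Icc 1 K),
            ∫ ω, d m ω * (d n ω)^2 ∂μ :=
        Finset.sum_congr rfl fun n hn => by rw [hfilt2 n hn]
      rw [hsum2]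
      ring
  exact key N le_rfl
end

section
/- Let f = 1_V with V of positive probability, and suppose E[1_V (S 1_V)^2] ≤ η P(V) where S is the martingale square function for a finite filtration. Then E[1_V (S 1_V)^3] ≤ C η^{1/2} P(V) for an absolute constant C, using the L^6 boundedness of the martingale square function. -/
/-!
On `V`, Cauchy–Schwarz gives `E[1_V S³] ≤ E[1_V S²]^{1/2} E[1_V S⁴]^{1/2}`, and Hölder with
exponents `(3, 3/2)` gives `E[1_V S⁴] ≤ P(V)^{1/3} E[S⁶]^{2/3} ≤ C₆⁴ P(V)`, because the `L⁶` bound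
reads `E[S⁶] ≤ C₆⁶ P(V)`. Both are instances of the log-convexity of `k ↦ ∫ gᵏ`. The estimates are
carried out for lower integrals of `‖S‖ₑ` against `μ.restrict V`, where no integrability side
conditions arise; only the hypothesis `E[1_V S²] ≤ η P(V)` needs `S ∈ L²` to be translated.
-/

open MeasureTheory Finset
open scoped ENNReal

theorem ENNReal.rpow_mul_rpow_of_add_eq_one (x : ℝ≥0∞) {a b : ℝ} (ha : 0 ≤ a) (hb : 0 ≤ b)
    (hab : a + b = 1) : x ^ a * x ^ b = x := by
  rw [← ENNReal.rpow_add_of_nonneg _ _ ha hb, hab, ENNReal.rpow_one]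

theorem ENNReal.pow_rpow_of_mul_eq (x : ℝ≥0∞) {k m : ℕ} {a : ℝ} (h : (k : ℝ) * a = m) :
    (x ^ k) ^ a = x ^ m := by
  rw [← ENNReal.rpow_natCast, ← ENNReal.rpow_mul, h, ENNReal.rpow_natCast]

section Moments

variable {α : Type*} [MeasurableSpace α] {ν : Measure α} {g : α → ℝ≥0∞}

theorem ENNReal.lintegral_pow_le_rpow_mul_rpow (hg : AEMeasurable g ν) {k m n : ℕ} {a b : ℝ}
    (ha : 0 ≤ a) (hb : 0 ≤ b) (hab : a + b = 1) (hk : (k : ℝ) = m * a + n * b) :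
    ∫⁻ x, g x ^ k ∂ν ≤ (∫⁻ x, g x ^ m ∂ν) ^ a * (∫⁻ x, g x ^ n ∂ν) ^ b := by
  have hsplit : ∀ x, g x ^ k = (g x ^ m) ^ a * (g x ^ n) ^ b := fun x => by
    simp only [← ENNReal.rpow_natCast, ← ENNReal.rpow_mul, hk]
    exact ENNReal.rpow_add_of_nonneg _ _ (by positivity) (by positivity)
  simp_rw [hsplit]
  exact ENNReal.lintegral_mul_norm_pow_le (hg.pow_const m) (hg.pow_const n) ha hb hab

theorem lintegral_pow_four_le_of_lintegral_pow_six_le (hg : AEMeasurable g ν) {b : ℝ≥0∞}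
    (h6 : ∫⁻ x, g x ^ 6 ∂ν ≤ b ^ 6 * ν Set.univ) :
    ∫⁻ x, g x ^ 4 ∂ν ≤ b ^ 4 * ν Set.univ :=
  calc ∫⁻ x, g x ^ 4 ∂ν
      ≤ (∫⁻ x, g x ^ 0 ∂ν) ^ (1 / 3 : ℝ) * (∫⁻ x, g x ^ 6 ∂ν) ^ (2 / 3 : ℝ) :=
        ENNReal.lintegral_pow_le_rpow_mul_rpow hg (by norm_num) (by norm_num) (by norm_num)
          (by norm_num)
    _ ≤ ν Set.univ ^ (1 / 3 : ℝ) * (b ^ 6 * ν Set.univ) ^ (2 / 3 : ℝ) := by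
        simp only [pow_zero, lintegral_const, one_mul]
        gcongr
    _ = b ^ 4 * ν Set.univ := by
        rw [ENNReal.mul_rpow_of_nonneg _ _ (by norm_num),
          ENNReal.pow_rpow_of_mul_eq _ (m := 4) (by norm_num), mul_left_comm,
          ENNReal.rpow_mul_rpow_of_add_eq_one _ (by norm_num) (by norm_num) (by norm_num)]

theorem lintegral_pow_three_le_of_moment_bounds (hg : AEMeasurable g ν) {a b : ℝ≥0∞}
    (h2 : ∫⁻ x, g x ^ 2 ∂ν ≤ a * ν Set.univ) (h6 : ∫⁻ x, g x ^ 6 ∂ν ≤ b ^ 6 * ν Set.univ) :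
    ∫⁻ x, g x ^ 3 ∂ν ≤ a ^ (1 / 2 : ℝ) * b ^ 2 * ν Set.univ :=
  calc ∫⁻ x, g x ^ 3 ∂ν
      ≤ (∫⁻ x, g x ^ 2 ∂ν) ^ (1 / 2 : ℝ) * (∫⁻ x, g x ^ 4 ∂ν) ^ (1 / 2 : ℝ) :=
        ENNReal.lintegral_pow_le_rpow_mul_rpow hg (by norm_num) (by norm_num) (by norm_num)
          (by norm_num)
    _ ≤ (a * ν Set.univ) ^ (1 / 2 : ℝ) * (b ^ 4 * ν Set.univ) ^ (1 / 2 : ℝ) := by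
        gcongr
        exact lintegral_pow_four_le_of_lintegral_pow_six_le hg h6
    _ = a ^ (1 / 2 : ℝ) * b ^ 2 * ν Set.univ := by
        rw [ENNReal.mul_rpow_of_nonneg _ _ (by norm_num),
          ENNReal.mul_rpow_of_nonneg _ _ (by norm_num),
          ENNReal.pow_rpow_of_mul_eq _ (m := 2) (by norm_num), mul_mul_mul_comm,
          ENNReal.rpow_mul_rpow_of_add_eq_one _ (by norm_num) (by norm_num) (by norm_num)]

end Moments

section RealFunctions

variable {α : Type*} [MeasurableSpace α] {μ : Measure α} {V : Set α}

theorem lintegral_enorm_pow_eq_eLpNorm_pow (f : α → ℝ) {p : ℕ} (hp : p ≠ 0) :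
    ∫⁻ x, ‖f x‖ₑ ^ p ∂μ = eLpNorm f p μ ^ p := by
  simpa [ENNReal.rpow_natCast] using
    (eLpNorm_nnreal_pow_eq_lintegral (f := f) (μ := μ) (p := p) (by exact_mod_cast hp)).symm

theorem lintegral_enorm_pow_le_of_eLpNorm_le_mul_indicator {f : α → ℝ} (hV : MeasurableSet V)
    {p : ℕ} (hp : p ≠ 0) {K : ℝ≥0∞}
    (h : eLpNorm f p μ ≤ K * eLpNorm (V.indicator fun _ => (1 : ℝ)) p μ) :
    ∫⁻ x, ‖f x‖ₑ ^ p ∂μ ≤ K ^ p * μ V := by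
  rw [eLpNorm_indicator_const hV (by exact_mod_cast hp) (ENNReal.natCast_ne_top p)] at h
  calc ∫⁻ x, ‖f x‖ₑ ^ p ∂μ = eLpNorm f p μ ^ p := lintegral_enorm_pow_eq_eLpNorm_pow f hp
    _ ≤ (K * μ V ^ (1 / (p : ℝ))) ^ p := by simpa using pow_le_pow_left' h p
    _ = K ^ p * μ V := by
        rw [mul_pow, ← ENNReal.rpow_natCast (μ V ^ _), ← ENNReal.rpow_mul,
          one_div_mul_cancel (by exact_mod_cast hp), ENNReal.rpow_one]

theorem integral_indicator_one_mul_pow_eq_toReal_setLIntegral (hV : MeasurableSet V)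
    {S : α → ℝ} (hS : ∀ x, 0 ≤ S x) (hSm : AEStronglyMeasurable S μ) (n : ℕ) :
    ∫ x, V.indicator (fun _ => (1 : ℝ)) x * S x ^ n ∂μ = (∫⁻ x in V, ‖S x‖ₑ ^ n ∂μ).toReal := by
  have hmul : ∀ x, V.indicator (fun _ => (1 : ℝ)) x * S x ^ n = V.indicator (S · ^ n) x :=
    fun x => by by_cases hx : x ∈ V <;> simp [hx]
  rw [integral_congr_ae (Filter.Eventually.of_forall hmul), integral_indicator hV,
    integral_eq_lintegral_of_nonneg_ae (Filter.Eventually.of_forall fun x => pow_nonneg (hS x) n)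
      (hSm.restrict.pow n)]
  congr 1
  refine lintegral_congr fun x => ?_
  rw [ENNReal.ofReal_pow (hS x), Real.enorm_eq_ofReal (hS x)]

theorem setLIntegral_enorm_pow_le_of_integral_indicator_one_mul_pow_le (hV : MeasurableSet V)
    (hμV : μ V ≠ ⊤) {S : α → ℝ} (hS : ∀ x, 0 ≤ S x) (hSm : AEStronglyMeasurable S μ) {n : ℕ}
    (hfin : ∫⁻ x in V, ‖S x‖ₑ ^ n ∂μ ≠ ⊤) {η : ℝ} (hη : 0 ≤ η)
    (h : ∫ x, V.indicator (fun _ => (1 : ℝ)) x * S x ^ n ∂μ ≤ η * (μ V).toReal) :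
    ∫⁻ x in V, ‖S x‖ₑ ^ n ∂μ ≤ ENNReal.ofReal η * μ V := by
  rw [integral_indicator_one_mul_pow_eq_toReal_setLIntegral hV hS hSm,
    ← ENNReal.le_ofReal_iff_toReal_le hfin (by positivity)] at h
  rwa [ENNReal.ofReal_mul hη, ENNReal.ofReal_toReal hμV] at h

theorem measurable_of_sq_eq {S F : α → ℝ} (hF : Measurable F) (hS : ∀ x, 0 ≤ S x)
    (hSF : ∀ x, S x ^ 2 = F x) : Measurable S := by
  have hS_sqrt : S = fun x => √(F x) := funext fun x => by rw [← hSF, Real.sqrt_sq (hS x)]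
  rw [hS_sqrt]
  fun_prop

end RealFunctions

/-- If `E[1_V (S 1_V)²] ≤ η P(V)` and the martingale square function is bounded on
`L⁶` with constant `C₆`, then `E[1_V (S 1_V)³] ≤ C η^{1/2} P(V)` with `C` depending
only on `C₆`. -/
theorem martingale_square_function_third_moment_small (C₆ : ℝ) (hC₆ : 0 < C₆) :
    ∃ C : ℝ, 0 < C ∧
      ∀ (Ω : Type) (m0 : MeasurableSpace Ω) (μ : Measure Ω), IsProbabilityMeasure μ →
      ∀ (N : ℕ) (ℱ : ℕ → MeasurableSpace Ω), Monotone ℱ → (∀ n, ℱ n ≤ m0) →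
      ∀ V : Set Ω, MeasurableSet[ℱ N] V → 0 < μ V →
      ∀ η : ℝ, 0 ≤ η →
      -- the square function `S 1_V`, written out pointwise
      ∀ S : Ω → ℝ,
        (∀ ω, S ω ^ 2 = ∑ n ∈ Icc 1 N,
            ((μ[V.indicator (fun _ => (1 : ℝ))|ℱ n]) ω -
              (μ[V.indicator (fun _ => (1 : ℝ))|ℱ (n - 1)]) ω) ^ 2) →
        (∀ ω, 0 ≤ S ω) →
        -- assumed L⁶ boundedness of the square function (BDG-type bound)
        eLpNorm S 6 μ ≤ ENNReal.ofReal C₆ * eLpNorm (V.indicator (fun _ => (1 : ℝ))) 6 μ →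
        -- smallness hypothesis
        ∫ ω, V.indicator (fun _ => (1 : ℝ)) ω * S ω ^ 2 ∂μ ≤ η * (μ V).toReal →
        ∫ ω, V.indicator (fun _ => (1 : ℝ)) ω * S ω ^ 3 ∂μ ≤
          C * η ^ (1 / 2 : ℝ) * (μ V).toReal := by
  refine ⟨C₆ ^ 2, by positivity, ?_⟩
  intro Ω m0 μ _ N ℱ _ hℱ V hV _ η hη S hS2 hS hL6 hsmall
  have hVm : MeasurableSet V := hℱ N V hV
  have hcond : ∀ n, Measurable (μ[V.indicator (fun _ => (1 : ℝ))|ℱ n]) := fun n =>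
    (stronglyMeasurable_condExp.mono (hℱ n)).measurable
  have hSm : Measurable S := measurable_of_sq_eq (by fun_prop) hS hS2
  have hS6 : MemLp S 6 μ := ⟨hSm.aestronglyMeasurable, hL6.trans_lt (ENNReal.mul_lt_top
    ENNReal.ofReal_lt_top (memLp_indicator_const 6 hVm 1 (Or.inr (measure_ne_top μ V))).2)⟩
  have h6 : ∫⁻ ω in V, ‖S ω‖ₑ ^ 6 ∂μ ≤ ENNReal.ofReal C₆ ^ 6 * μ V :=
    (setLIntegral_le_lintegral V _).trans
      (lintegral_enorm_pow_le_of_eLpNorm_le_mul_indicator hVm (by norm_num) hL6)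
  have h2fin : ∫⁻ ω in V, ‖S ω‖ₑ ^ 2 ∂μ ≠ ⊤ := by
    rw [lintegral_enorm_pow_eq_eLpNorm_pow S two_ne_zero]
    exact ENNReal.pow_ne_top ((hS6.mono_exponent (by norm_num)).restrict V).eLpNorm_ne_top
  have h2 : ∫⁻ ω in V, ‖S ω‖ₑ ^ 2 ∂μ ≤ ENNReal.ofReal η * μ V :=
    setLIntegral_enorm_pow_le_of_integral_indicator_one_mul_pow_le hVm (measure_ne_top μ V) hS
      hSm.aestronglyMeasurable h2fin hη hsmall
  have h3 := lintegral_pow_three_le_of_moment_bounds (ν := μ.restrict V) hSm.enorm.aemeasurable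
    (by rwa [Measure.restrict_apply_univ]) (by rwa [Measure.restrict_apply_univ])
  rw [integral_indicator_one_mul_pow_eq_toReal_setLIntegral hVm hS hSm.aestronglyMeasurable]
  refine ENNReal.toReal_le_of_le_ofReal (by positivity) (h3.trans_eq ?_)
  rw [Measure.restrict_apply_univ, ENNReal.ofReal_mul (by positivity),
    ENNReal.ofReal_mul (by positivity), ENNReal.ofReal_toReal (measure_ne_top μ V),
    ENNReal.ofReal_pow hC₆.le, ENNReal.ofReal_rpow_of_nonneg hη (by norm_num),
    mul_comm (ENNReal.ofReal C₆ ^ 2)]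
end

section
/- Let T be the Haar shift defined by T h_{I_-} = h_{I_+}, T h_{I_+} = -h_{I_-}. Then for any dyadic interval J, the function (T 1_J) · 1_J is identically zero, i.e. T 1_J vanishes a.e. on J. -/
open MeasureTheory

/-- The Haar function of the dyadic interval `[2ⁿk, 2ⁿ(k+1))`, as an element of
`L²(ℝ)`: `h_I = |I|^{-1/2} (1_{I₊} - 1_{I₋})`. -/
noncomputable def haarLp (n k : ℤ) : Lp ℝ 2 (volume : Measure ℝ) :=
  indicatorConstLp 2
    (measurableSet_Ico : MeasurableSet
      (Set.Ico ((2 : ℝ) ^ n * ((k : ℝ) + 1 / 2)) ((2 : ℝ) ^ n * ((k : ℝ) + 1))))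
    (by rw [Real.volume_Ico]; exact ENNReal.ofReal_ne_top)
    ((Real.sqrt ((2 : ℝ) ^ n))⁻¹) -
  indicatorConstLp 2
    (measurableSet_Ico : MeasurableSet
      (Set.Ico ((2 : ℝ) ^ n * (k : ℝ)) ((2 : ℝ) ^ n * ((k : ℝ) + 1 / 2))))
    (by rw [Real.volume_Ico]; exact ENNReal.ofReal_ne_top)
    ((Real.sqrt ((2 : ℝ) ^ n))⁻¹)

namespace HaarAux

noncomputable def indLp (n k : ℤ) : Lp ℝ 2 (volume : Measure ℝ) :=
  indicatorConstLp 2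
    (measurableSet_Ico : MeasurableSet
      (Set.Ico ((2 : ℝ) ^ n * (k : ℝ)) ((2 : ℝ) ^ n * ((k : ℝ) + 1))))
    (by rw [Real.volume_Ico]; exact ENNReal.ofReal_ne_top) (1 : ℝ)

def ico (n k : ℤ) : Set ℝ := Set.Ico ((2 : ℝ) ^ n * (k : ℝ)) ((2 : ℝ) ^ n * ((k : ℝ) + 1))

lemma indLp_coe (n k : ℤ) :
    (indLp n k : ℝ → ℝ) =ᵐ[volume] (ico n k).indicator (fun _ => (1:ℝ)) :=
  indicatorConstLp_coeFn

-- left child of parent (n+1, q) is (n, 2q), right child is (n, 2q+1)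
lemma left_eq (n q : ℤ) : ico n (2*q) =
    Set.Ico ((2:ℝ)^(n+1) * (q:ℝ)) ((2:ℝ)^(n+1) * ((q:ℝ) + 1/2)) := by
  unfold ico
  rw [zpow_add_one₀ (two_ne_zero)]
  push_cast
  ring_nf

lemma right_eq (n q : ℤ) : ico n (2*q+1) =
    Set.Ico ((2:ℝ)^(n+1) * ((q:ℝ) + 1/2)) ((2:ℝ)^(n+1) * ((q:ℝ) + 1)) := by
  unfold ico
  rw [zpow_add_one₀ (two_ne_zero)]
  push_cast
  ring_nf

lemma union_eq (n q : ℤ) : ico n (2*q) ∪ ico n (2*q+1) = ico (n+1) q := by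
  rw [left_eq, right_eq]
  show Set.Ico _ _ ∪ Set.Ico _ _ = Set.Ico _ _
  apply Set.Ico_union_Ico_eq_Ico <;> nlinarith [zpow_pos (show (0:ℝ) < 2 by norm_num) (n+1)]

lemma disj (n q : ℤ) : Disjoint (ico n (2*q)) (ico n (2*q+1)) := by
  rw [left_eq, right_eq]
  exact Set.Ico_disjoint_Ico_same

lemma add_halves (n q : ℤ) : indLp n (2*q) + indLp n (2*q+1) = indLp (n+1) q := by
  apply Lp.ext ?_
  filter_upwards [Lp.coeFn_add (indLp n (2*q)) (indLp n (2*q+1)), indLp_coe n (2*q),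
    indLp_coe n (2*q+1), indLp_coe (n+1) q] with x h1 h2 h3 h4
  rw [h1]
  simp only [Pi.add_apply, h2, h3, h4, ← union_eq n q,
    Set.indicator_union_of_disjoint (disj n q)]


lemma sqrt_pos' (n : ℤ) : 0 < Real.sqrt ((2:ℝ)^n) :=
  Real.sqrt_pos.2 (zpow_pos (by norm_num) n)

lemma sub_halves (n q : ℤ) : indLp n (2*q+1) - indLp n (2*q) =
    (Real.sqrt ((2:ℝ)^(n+1))) • haarLp (n+1) q := by
  set c := Real.sqrt ((2:ℝ)^(n+1)) with hcdef
  have hc : c * c⁻¹ = 1 := mul_inv_cancel₀ (ne_of_gt (sqrt_pos' (n+1)))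
  set A := (indicatorConstLp 2
      (measurableSet_Ico : MeasurableSet
        (Set.Ico ((2 : ℝ) ^ (n+1) * ((q : ℝ) + 1 / 2)) ((2 : ℝ) ^ (n+1) * ((q : ℝ) + 1))))
      (by rw [Real.volume_Ico]; exact ENNReal.ofReal_ne_top)
      ((Real.sqrt ((2 : ℝ) ^ (n+1)))⁻¹) : Lp ℝ 2 (volume : Measure ℝ)) with hA
  set B := (indicatorConstLp 2
      (measurableSet_Ico : MeasurableSet
        (Set.Ico ((2 : ℝ) ^ (n+1) * (q : ℝ)) ((2 : ℝ) ^ (n+1) * ((q : ℝ) + 1 / 2))))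
      (by rw [Real.volume_Ico]; exact ENNReal.ofReal_ne_top)
      ((Real.sqrt ((2 : ℝ) ^ (n+1)))⁻¹) : Lp ℝ 2 (volume : Measure ℝ)) with hB
  have hHaar : haarLp (n+1) q = A - B := rfl
  have hRA : (A : ℝ → ℝ) =ᵐ[volume]
      (Set.Ico ((2 : ℝ) ^ (n+1) * ((q : ℝ) + 1 / 2)) ((2 : ℝ) ^ (n+1) * ((q : ℝ) + 1))).indicator
        (fun _ => c⁻¹) := indicatorConstLp_coeFn
  have hLB : (B : ℝ → ℝ) =ᵐ[volume]
      (Set.Ico ((2 : ℝ) ^ (n+1) * (q : ℝ)) ((2 : ℝ) ^ (n+1) * ((q : ℝ) + 1 / 2))).indicator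
        (fun _ => c⁻¹) := indicatorConstLp_coeFn
  apply Lp.ext ?_
  rw [hHaar]
  filter_upwards [Lp.coeFn_sub (indLp n (2*q+1)) (indLp n (2*q)), indLp_coe n (2*q),
    indLp_coe n (2*q+1), Lp.coeFn_smul c (A - B), Lp.coeFn_sub A B, hRA, hLB]
    with x h1 h2 h3 h4 h5 h6 h7
  rw [h1, h4]
  simp only [Pi.sub_apply, Pi.smul_apply, h2, h3, h5, h6, h7]
  rw [right_eq, left_eq]
  simp only [Set.indicator_apply]
  split_ifs <;> simp [smul_eq_mul, mul_sub, hc]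


lemma ico_disjoint_of_lt {n a b : ℤ} (h : a < b) : Disjoint (ico n a) (ico n b) := by
  have h2 : (0:ℝ) < (2:ℝ)^n := zpow_pos (by norm_num) n
  have hab : (a:ℝ) + 1 ≤ (b:ℝ) := by exact_mod_cast h
  unfold ico
  rw [Set.Ico_disjoint_Ico]
  calc min ((2:ℝ)^n * ((a:ℝ)+1)) ((2:ℝ)^n * ((b:ℝ)+1)) ≤ (2:ℝ)^n * ((a:ℝ)+1) :=
        min_le_left _ _
    _ ≤ (2:ℝ)^n * (b:ℝ) := by nlinarith
    _ ≤ max ((2:ℝ)^n * (a:ℝ)) ((2:ℝ)^n * (b:ℝ)) := le_max_right _ _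

lemma ico_disjoint {n a b : ℤ} (h : a ≠ b) : Disjoint (ico n a) (ico n b) := by
  rcases h.lt_or_gt with h' | h'
  · exact ico_disjoint_of_lt h'
  · exact (ico_disjoint_of_lt h').symm

lemma haar_zero_outside (n k : ℤ) :
    ∀ᵐ x ∂(volume : Measure ℝ), x ∉ ico n k → ((haarLp n k : Lp ℝ 2 (volume : Measure ℝ)) : ℝ → ℝ) x = 0 := by
  have hA : ((haarLp n k : Lp ℝ 2 (volume : Measure ℝ)) : ℝ → ℝ) =ᵐ[volume]
      fun x => (Set.Ico ((2:ℝ)^n * ((k:ℝ) + 1/2)) ((2:ℝ)^n * ((k:ℝ)+1))).indicator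
          (fun _ => (Real.sqrt ((2:ℝ)^n))⁻¹) x
        - (Set.Ico ((2:ℝ)^n * (k:ℝ)) ((2:ℝ)^n * ((k:ℝ)+1/2))).indicator
          (fun _ => (Real.sqrt ((2:ℝ)^n))⁻¹) x := by
    filter_upwards [Lp.coeFn_sub
      (indicatorConstLp 2 (measurableSet_Ico : MeasurableSet
        (Set.Ico ((2:ℝ)^n * ((k:ℝ) + 1/2)) ((2:ℝ)^n * ((k:ℝ)+1))))
        (by rw [Real.volume_Ico]; exact ENNReal.ofReal_ne_top) ((Real.sqrt ((2:ℝ)^n))⁻¹))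
      (indicatorConstLp 2 (measurableSet_Ico : MeasurableSet
        (Set.Ico ((2:ℝ)^n * (k:ℝ)) ((2:ℝ)^n * ((k:ℝ)+1/2))))
        (by rw [Real.volume_Ico]; exact ENNReal.ofReal_ne_top) ((Real.sqrt ((2:ℝ)^n))⁻¹)),
      (indicatorConstLp_coeFn (p := 2) (μ := (volume : Measure ℝ))
        (hs := (measurableSet_Ico : MeasurableSet
          (Set.Ico ((2:ℝ)^n * ((k:ℝ) + 1/2)) ((2:ℝ)^n * ((k:ℝ)+1)))))
        (hμs := by rw [Real.volume_Ico]; exact ENNReal.ofReal_ne_top)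
        (c := (Real.sqrt ((2:ℝ)^n))⁻¹)),
      (indicatorConstLp_coeFn (p := 2) (μ := (volume : Measure ℝ))
        (hs := (measurableSet_Ico : MeasurableSet
          (Set.Ico ((2:ℝ)^n * (k:ℝ)) ((2:ℝ)^n * ((k:ℝ)+1/2)))))
        (hμs := by rw [Real.volume_Ico]; exact ENNReal.ofReal_ne_top)
        (c := (Real.sqrt ((2:ℝ)^n))⁻¹))] with x h1 h2 h3
    rw [show (haarLp n k : Lp ℝ 2 (volume : Measure ℝ)) = _ - _ from rfl, h1]
    simp only [Pi.sub_apply]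
    rw [h2, h3]
  filter_upwards [hA] with x hx hmem
  rw [hx]
  have h2 : (0:ℝ) < (2:ℝ)^n := zpow_pos (by norm_num) n
  have hxR : x ∉ Set.Ico ((2:ℝ)^n * ((k:ℝ) + 1/2)) ((2:ℝ)^n * ((k:ℝ)+1)) := by
    intro hc; exact hmem ⟨by nlinarith [hc.1], hc.2⟩
  have hxL : x ∉ Set.Ico ((2:ℝ)^n * (k:ℝ)) ((2:ℝ)^n * ((k:ℝ)+1/2)) := by
    intro hc; exact hmem ⟨hc.1, by nlinarith [hc.2]⟩
  rw [Set.indicator_of_notMem hxR, Set.indicator_of_notMem hxL, sub_zero]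

lemma haar_vanish {a b : ℤ} (n : ℤ) (h : a ≠ b) (r : ℝ) :
    ∀ᵐ x ∂(volume : Measure ℝ), x ∈ ico n b →
      ((r • haarLp n a : Lp ℝ 2 (volume : Measure ℝ)) : ℝ → ℝ) x = 0 := by
  filter_upwards [haar_zero_outside n a, Lp.coeFn_smul r (haarLp n a)] with x h1 h2 hmem
  rw [h2]
  have : x ∉ ico n a := fun hc => (ico_disjoint h).ne_of_mem hc hmem rfl
  simp [h1 this]


lemma left_formula (n q : ℤ) : indLp n (2*q) = (1/2:ℝ) • indLp (n+1) q
    - (Real.sqrt ((2:ℝ)^(n+1)) / 2) • haarLp (n+1) q := by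
  have h1 := add_halves n q
  have h2 := sub_halves n q
  have : (2:ℝ) • indLp n (2*q) = indLp (n+1) q - Real.sqrt ((2:ℝ)^(n+1)) • haarLp (n+1) q := by
    rw [← h1, ← h2]; module
  have h3 := congrArg (fun v => (1/2:ℝ) • v) this
  simp only [smul_smul] at h3
  norm_num at h3
  rw [h3]
  module

lemma right_formula (n q : ℤ) : indLp n (2*q+1) = (1/2:ℝ) • indLp (n+1) q
    + (Real.sqrt ((2:ℝ)^(n+1)) / 2) • haarLp (n+1) q := by
  have h1 := add_halves n q
  have h2 := sub_halves n q
  have : (2:ℝ) • indLp n (2*q+1) = indLp (n+1) q + Real.sqrt ((2:ℝ)^(n+1)) • haarLp (n+1) q := by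
    rw [← h1, ← h2]; module
  have h3 := congrArg (fun v => (1/2:ℝ) • v) this
  simp only [smul_smul] at h3
  norm_num at h3
  rw [h3]
  module

lemma step (T : Lp ℝ 2 (volume : Measure ℝ) →L[ℝ] Lp ℝ 2 (volume : Measure ℝ))
    (hT : ∀ n k : ℤ,
      T (haarLp n (2 * k)) = haarLp n (2 * k + 1) ∧
      T (haarLp n (2 * k + 1)) = -haarLp n (2 * k))
    (n k : ℤ) : ∃ q : ℤ, ico n k ⊆ ico (n+1) q ∧ ∃ u : Lp ℝ 2 (volume : Measure ℝ),
      (∀ᵐ x ∂(volume : Measure ℝ), x ∈ ico (n+1) q → (u : ℝ → ℝ) x = 0) ∧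
      T (indLp n k) = u + (1/2:ℝ) • T (indLp (n+1) q) := by
  have key : ∀ q : ℤ, ∃ s : ℤ, s ≠ q ∧ ∃ r : ℝ,
      T (haarLp (n+1) q) = r • haarLp (n+1) s := by
    intro q
    rcases Int.even_or_odd q with ⟨t, ht⟩ | ⟨t, ht⟩
    · refine ⟨q + 1, by omega, 1, ?_⟩
      have := (hT (n+1) t).1
      rw [show q = 2*t by omega, show 2*t+1 = 2*t+1 from rfl]
      simpa using this
    · refine ⟨q - 1, by omega, -1, ?_⟩
      have := (hT (n+1) t).2
      rw [show q = 2*t+1 by omega]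
      rw [this]
      rw [show 2*t+1-1 = 2*t by omega]
      module
  have sub : ∀ q : ℤ, ico n (2*q) ⊆ ico (n+1) q ∧ ico n (2*q+1) ⊆ ico (n+1) q := by
    intro q
    constructor
    · rw [← union_eq n q]; exact Set.subset_union_left
    · rw [← union_eq n q]; exact Set.subset_union_right
  rcases Int.even_or_odd k with ⟨q, hq⟩ | ⟨q, hq⟩
  · -- k = 2q
    obtain ⟨s, hs, r, hr⟩ := key q
    refine ⟨q, by rw [show k = 2*q by omega]; exact (sub q).1,
      (-(Real.sqrt ((2:ℝ)^(n+1)) / 2) * r) • haarLp (n+1) s, haar_vanish (n+1) hs _, ?_⟩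
    rw [show k = 2*q by omega, left_formula n q, map_sub, T.map_smul, T.map_smul, hr]
    module
  · obtain ⟨s, hs, r, hr⟩ := key q
    refine ⟨q, by rw [show k = 2*q+1 by omega]; exact (sub q).2,
      ((Real.sqrt ((2:ℝ)^(n+1)) / 2) * r) • haarLp (n+1) s, haar_vanish (n+1) hs _, ?_⟩
    rw [show k = 2*q+1 by omega, right_formula n q, map_add, T.map_smul, T.map_smul, hr]
    module


lemma iter (T : Lp ℝ 2 (volume : Measure ℝ) →L[ℝ] Lp ℝ 2 (volume : Measure ℝ))
    (hT : ∀ n k : ℤ,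
      T (haarLp n (2 * k)) = haarLp n (2 * k + 1) ∧
      T (haarLp n (2 * k + 1)) = -haarLp n (2 * k))
    (n k : ℤ) (i : ℕ) : ∃ n' k' : ℤ, n' = n + i ∧ ico n k ⊆ ico n' k' ∧
    ∃ u : Lp ℝ 2 (volume : Measure ℝ),
      (∀ᵐ x ∂(volume : Measure ℝ), x ∈ ico n k → (u : ℝ → ℝ) x = 0) ∧
      T (indLp n k) = u + ((2:ℝ)^(-(i:ℤ))) • T (indLp n' k') := by
  induction i with
  | zero =>
    refine ⟨n, k, by simp, subset_rfl, 0, ?_, by simp⟩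
    filter_upwards [Lp.coeFn_zero ℝ 2 (volume : Measure ℝ)] with x hx _
    exact hx
  | succ i ih =>
    obtain ⟨n', k', hn', hsub, u, hu, heq⟩ := ih
    obtain ⟨q, hsub2, v, hv, heq2⟩ := step T hT n' k'
    refine ⟨n' + 1, q, by omega, hsub.trans hsub2, u + ((2:ℝ)^(-(i:ℤ))) • v, ?_, ?_⟩
    · filter_upwards [hu, hv, Lp.coeFn_add u (((2:ℝ)^(-(i:ℤ))) • v),
        Lp.coeFn_smul ((2:ℝ)^(-(i:ℤ))) v] with x h1 h2 h3 h4 hmem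
      rw [h3]
      simp only [Pi.add_apply, h4, Pi.smul_apply]
      rw [h1 hmem, h2 (hsub2 (hsub hmem))]
      simp
    · rw [heq, heq2, smul_add, smul_smul, ← add_assoc]
      congr 1
      rw [show (2:ℝ)^(-(i:ℤ)) * (1/2) = (2:ℝ)^(-((i:ℕ)+1:ℕ):ℤ) by
        rw [show (-((i:ℕ)+1:ℕ):ℤ) = -(i:ℤ) + (-1) by push_cast; ring,
          zpow_add₀ (two_ne_zero)]
        norm_num]


lemma sqrt_pow_nat (n : ℕ) : Real.sqrt ((2:ℝ)^n) = (Real.sqrt 2)^n := by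
  induction n with
  | zero => simp
  | succ i ih => rw [pow_succ, pow_succ, Real.sqrt_mul (by positivity), ih]

lemma norm_indLp (n k : ℤ) : ‖indLp n k‖ = Real.sqrt ((2:ℝ)^n) := by
  rw [indLp, norm_indicatorConstLp (by norm_num) (by norm_num)]
  rw [measureReal_def, Real.volume_Ico, show (2:ℝ)^n * ((k:ℝ)+1) - (2:ℝ)^n * (k:ℝ) = (2:ℝ)^n by ring,
    ENNReal.toReal_ofReal (le_of_lt (zpow_pos (by norm_num) n))]
  rw [Real.sqrt_eq_rpow]
  norm_num

end HaarAux

/-- For the Haar shift `T h_{I₋} = h_{I₊}`, `T h_{I₊} = -h_{I₋}` and any dyadic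
interval `J = [2ᵐj, 2ᵐ(j+1))`, the function `T 1_J` vanishes a.e. on `J`. -/
theorem haar_shift_indicator_vanishes_on_interval
    (T : Lp ℝ 2 (volume : Measure ℝ) →L[ℝ] Lp ℝ 2 (volume : Measure ℝ))
    (hT : ∀ n k : ℤ,
      T (haarLp n (2 * k)) = haarLp n (2 * k + 1) ∧
      T (haarLp n (2 * k + 1)) = -haarLp n (2 * k))
    (m j : ℤ) :
    ∀ᵐ x ∂(volume : Measure ℝ),
      x ∈ Set.Ico ((2 : ℝ) ^ m * (j : ℝ)) ((2 : ℝ) ^ m * ((j : ℝ) + 1)) →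
      (T (indicatorConstLp 2
        (measurableSet_Ico : MeasurableSet
          (Set.Ico ((2 : ℝ) ^ m * (j : ℝ)) ((2 : ℝ) ^ m * ((j : ℝ) + 1))))
        (by rw [Real.volume_Ico]; exact ENNReal.ofReal_ne_top)
        (1 : ℝ))) x = 0 := by
  have main : ∀ᵐ x ∂(volume : Measure ℝ), x ∈ HaarAux.ico m j →
      ((T (HaarAux.indLp m j) : Lp ℝ 2 (volume : Measure ℝ)) : ℝ → ℝ) x = 0 := by
    have hJ : MeasurableSet (HaarAux.ico m j) := measurableSet_Ico
    rw [← ae_restrict_iff' hJ]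
    set μJ := (volume : Measure ℝ).restrict (HaarAux.ico m j) with hμJ
    set g : ℝ → ℝ := ((T (HaarAux.indLp m j) : Lp ℝ 2 (volume : Measure ℝ)) : ℝ → ℝ) with hg
    have hmeas : AEStronglyMeasurable g μJ := (Lp.aestronglyMeasurable _).restrict
    suffices hE : eLpNorm g 2 μJ = 0 by
      have := (eLpNorm_eq_zero_iff hmeas (by norm_num)).1 hE
      filter_upwards [this] with x hx
      exact hx
    -- the bounding sequence
    set D : ℝ := ‖T‖ * Real.sqrt ((2:ℝ)^m) with hD
    set r : ℝ := Real.sqrt 2 / 2 with hr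
    have hr0 : 0 ≤ r := by positivity
    have hr1 : r < 1 := by
      have h2 : Real.sqrt 2 < 2 := by
        nlinarith [Real.sq_sqrt (show (0:ℝ) ≤ 2 by norm_num), Real.sqrt_nonneg 2]
      rw [hr]; linarith
    have htend : Filter.Tendsto (fun i : ℕ => ENNReal.ofReal (D * r^i))
        Filter.atTop (nhds 0) := by
      have h1 : Filter.Tendsto (fun i : ℕ => D * r^i) Filter.atTop (nhds 0) := by
        have := (tendsto_pow_atTop_nhds_zero_of_lt_one hr0 hr1).const_mul D
        simpa using this
      have := (ENNReal.continuous_ofReal.tendsto 0).comp h1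
      simpa using (by exact this : Filter.Tendsto (fun i : ℕ => ENNReal.ofReal (D * r^i)) Filter.atTop (nhds (ENNReal.ofReal 0)))
    refine le_antisymm (ge_of_tendsto' htend ?_) zero_le
    intro i
    obtain ⟨n', k', hn', hsub, u, hu, heq⟩ := HaarAux.iter T hT m j i
    have h0 : g =ᵐ[μJ] ((((2:ℝ)^(-(i:ℤ))) • T (HaarAux.indLp n' k') :
        Lp ℝ 2 (volume : Measure ℝ)) : ℝ → ℝ) := by
      rw [hg, heq]
      filter_upwards [ae_restrict_of_ae
        (Lp.coeFn_add u (((2:ℝ)^(-(i:ℤ))) • T (HaarAux.indLp n' k'))),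
        (ae_restrict_iff' hJ).2 hu] with x h1 h2
      rw [h1]
      simp [h2]
    have hbound : ‖(((2:ℝ)^(-(i:ℤ))) • T (HaarAux.indLp n' k') :
        Lp ℝ 2 (volume : Measure ℝ))‖ ≤ D * r^i := by
      rw [norm_smul]
      have hpos : (0:ℝ) < (2:ℝ)^(-(i:ℤ)) := zpow_pos (by norm_num) _
      rw [Real.norm_eq_abs, abs_of_pos hpos]
      have h1 : ‖T (HaarAux.indLp n' k')‖ ≤ ‖T‖ * ‖HaarAux.indLp n' k'‖ := T.le_opNorm _
      have h2 : ‖HaarAux.indLp n' k'‖ = Real.sqrt ((2:ℝ)^m) * (Real.sqrt 2)^i := by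
        rw [HaarAux.norm_indLp, hn', zpow_add₀ (two_ne_zero), zpow_natCast,
          Real.sqrt_mul (le_of_lt (zpow_pos (by norm_num) m)), HaarAux.sqrt_pow_nat]
      have h3 : (2:ℝ)^(-(i:ℤ)) = ((2:ℝ)^i)⁻¹ := by rw [zpow_neg, zpow_natCast]
      have h4 : D * r^i = ((2:ℝ)^i)⁻¹ * (‖T‖ * (Real.sqrt ((2:ℝ)^m) * (Real.sqrt 2)^i)) := by
        rw [hD, hr, div_pow]
        ring
      rw [h3, h4]
      have hTnn : (0:ℝ) ≤ ((2:ℝ)^i)⁻¹ := by positivity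
      refine mul_le_mul_of_nonneg_left ?_ hTnn
      rw [← h2]; exact h1
    calc eLpNorm g 2 μJ
        = eLpNorm (((((2:ℝ)^(-(i:ℤ))) • T (HaarAux.indLp n' k') :
            Lp ℝ 2 (volume : Measure ℝ))) : ℝ → ℝ) 2 μJ := eLpNorm_congr_ae h0
      _ ≤ eLpNorm (((((2:ℝ)^(-(i:ℤ))) • T (HaarAux.indLp n' k') :
            Lp ℝ 2 (volume : Measure ℝ))) : ℝ → ℝ) 2 volume :=
          eLpNorm_mono_measure _ Measure.restrict_le_self
      _ = ENNReal.ofReal ‖(((2:ℝ)^(-(i:ℤ))) • T (HaarAux.indLp n' k') :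
            Lp ℝ 2 (volume : Measure ℝ))‖ := by
          rw [Lp.norm_def, ENNReal.ofReal_toReal (Lp.eLpNorm_ne_top _)]
      _ ≤ ENNReal.ofReal (D * r^i) := ENNReal.ofReal_le_ofReal hbound
  exact main
end
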